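/- Under the hypotheses of the SPPS construction (P\'olya-factored $L$ with nonvanishing continuous $b_0,\dots,b_n$ and continuous $r$ on $[x_1,x_2]$), the SPPS solution $u_k(x) = b_0(x) \sum_{m=0}^\infty \frac{P_k^{(m)}(x)}{(mn+k-1)!} \lambda^m$ satisfies $L u_k = \lambda r u_k$ on $[x_1,x_2]$ for every $\lambda \in \mathbb{C}$. -/

import Mathlib

noncomputable def Dchain (b : ℕ → ℝ → ℂ) : ℕ → (ℝ → ℂ) → (ℝ → ℂ)
  | 0, y => fun x => y x / b 0 x
  | m + 1, y => fun x => deriv (Dchain b m y) x / b (m + 1) x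

/-- `Rint b x0 n f n = ∫ b_1 ∫ b_2 ⋯ ∫ b_n f` built from the inside out. -/
noncomputable def Rint (b : ℕ → ℝ → ℂ) (x0 : ℝ) (n : ℕ) (f : ℝ → ℂ) : ℕ → ℝ → ℂ
  | 0 => f
  | m + 1 => fun x => ∫ s in x0..x, b (n - m) s * Rint b x0 n f m s

/-- `𝓘_{1,k} = ∫ b_1 ⋯ ∫ b_k 1`, with `𝓘_{1,0} ≡ 1`. -/
noncomputable def I1 (b : ℕ → ℝ → ℂ) (x0 : ℝ) (k : ℕ) : ℝ → ℂ :=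
  Rint b x0 k (fun _ => 1) k

/-- `(𝓘_{1,n} ∘ (r b₀ ·))^m 𝓘_{1,k-1}`, so that the main formal power is
`P_k^{(m)} = (mn+k-1)! ⬝ formalQ … m`. -/
noncomputable def formalQ (b : ℕ → ℝ → ℂ) (r : ℝ → ℂ) (x0 : ℝ) (n k : ℕ) :
    ℕ → ℝ → ℂ
  | 0 => I1 b x0 (k - 1)
  | m + 1 => Rint b x0 n (fun x => r x * b 0 x * formalQ b r x0 n k m x) n

/-!
The series `S = ∑ₘ λᵐ Qₘ` (with `Qₘ = P_k^{(m)}/(mn+k-1)!`) converges locally uniformly, because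
`|Qₘ(x)| ≤ C (K Mⁿ)ᵐ |x - x₀|^{mn} / (mn)!` on every ball around `x₀`. Integrating termwise, the
recursion `Qₘ₊₁ = 𝓘_{1,n}(r b₀ Qₘ)` becomes the Volterra equation
`S = 𝓘_{1,k-1} + λ 𝓘_{1,n}(r b₀ S)`. Each step `D_j` of `L = D_n` strips the outermost integral,
`D_j (b₀ 𝓘_{1,n} f) = 𝓘_{j+1,n} f`, so `L` kills `b₀ 𝓘_{1,k-1}` (as `k - 1 < n`) and sends
`b₀ 𝓘_{1,n} f` to `f`; hence `L (b₀ S) = λ r b₀ S`.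
-/

open MeasureTheory

lemma exists_norm_le_near {E : Type*} [SeminormedAddCommGroup E] {f : ℝ → E} (hf : Continuous f)
    (x0 R : ℝ) : ∃ C, 0 ≤ C ∧ ∀ s, |s - x0| ≤ R → ‖f s‖ ≤ C := by
  obtain ⟨C, hC⟩ := (isCompact_closedBall x0 R).exists_bound_of_continuousOn hf.continuousOn
  exact ⟨max C 0, le_max_right _ _, fun s hs =>
    (hC s (by rwa [Metric.mem_closedBall, Real.dist_eq])).trans (le_max_left _ _)⟩

lemma exists_norm_le_near_of_le {E : Type*} [SeminormedAddCommGroup E] {f : ℕ → ℝ → E}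
    (hf : ∀ i, Continuous (f i)) (n : ℕ) (x0 R : ℝ) :
    ∃ C, 0 ≤ C ∧ ∀ i ≤ n, ∀ s, |s - x0| ≤ R → ‖f i s‖ ≤ C := by
  obtain ⟨C, hC0, hC⟩ :=
    exists_norm_le_near (f := fun s => ∑ i ∈ Finset.range (n + 1), ‖f i s‖) (by fun_prop) x0 R
  refine ⟨C, hC0, fun i hi s hs => le_trans ?_ ((Real.le_norm_self _).trans (hC s hs))⟩
  exact Finset.single_le_sum (f := fun i => ‖f i s‖) (fun _ _ => norm_nonneg _)
    (Finset.mem_range.2 (Nat.lt_succ_of_le hi))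

lemma norm_integral_le_pow_div_factorial {x0 x C : ℝ} {q : ℕ} {h : ℝ → ℂ}
    (hh : ∀ s, |s - x0| ≤ |x - x0| → ‖h s‖ ≤ C * |s - x0| ^ q / q.factorial) :
    ‖∫ s in x0..x, h s‖ ≤ C * |x - x0| ^ (q + 1) / (q + 1).factorial := by
  have hint : IntegrableOn (fun s => C * |s - x0| ^ q / q.factorial) (Set.uIoc x0 x) :=
    Continuous.integrableOn_uIoc (by fun_prop)
  calc ‖∫ s in x0..x, h s‖ = ‖∫ s in Set.uIoc x0 x, h s‖ :=
        intervalIntegral.norm_integral_eq_norm_integral_uIoc _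
    _ ≤ ∫ s in Set.uIoc x0 x, C * |s - x0| ^ q / q.factorial :=
        norm_integral_le_of_norm_le hint <| (ae_restrict_mem measurableSet_uIoc).mono fun s hs =>
          hh s (Set.abs_sub_left_of_mem_uIcc (Set.uIoc_subset_uIcc hs))
    _ = C * |x - x0| ^ (q + 1) / (q + 1).factorial := by
        simp_rw [div_eq_mul_inv, integral_mul_const, integral_const_mul, integral_pow_abs_sub_uIoc,
          Nat.factorial_succ]
        push_cast
        field_simp

section Rint

variable {b : ℕ → ℝ → ℂ} {x0 : ℝ} {n : ℕ}

lemma Rint_continuous (hbc : ∀ i, Continuous (b i)) {f : ℝ → ℂ} (hf : Continuous f) :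
    ∀ j, Continuous (Rint b x0 n f j)
  | 0 => hf
  | j + 1 => intervalIntegral.continuous_primitive
      (fun _ _ => ((hbc _).mul (Rint_continuous hbc hf j)).intervalIntegrable _ _) x0

lemma hasDerivAt_Rint_succ (hbc : ∀ i, Continuous (b i)) {f : ℝ → ℂ} (hf : Continuous f)
    (j : ℕ) (x : ℝ) : HasDerivAt (Rint b x0 n f (j + 1)) (b (n - j) x * Rint b x0 n f j x) x :=
  (((hbc _).mul (Rint_continuous hbc hf j)).integral_hasStrictDerivAt x0 x).hasDerivAt

lemma hasDerivAt_Rint_sub (hbc : ∀ i, Continuous (b i)) {f : ℝ → ℂ} (hf : Continuous f)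
    {j : ℕ} (hj : j < n) (x : ℝ) :
    HasDerivAt (Rint b x0 n f (n - j)) (b (j + 1) x * Rint b x0 n f (n - (j + 1)) x) x := by
  obtain ⟨i, hi, hi'⟩ : ∃ i, n - j = i + 1 ∧ n - (j + 1) = i := ⟨n - (j + 1), by omega, rfl⟩
  have hb : n - i = j + 1 := by omega
  simpa only [hi, hi', hb] using hasDerivAt_Rint_succ (x0 := x0) (n := n) hbc hf i x

lemma Rint_const_mul (c : ℂ) (f : ℝ → ℂ) :
    ∀ j, Rint b x0 n (fun s => c * f s) j = fun x => c * Rint b x0 n f j x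
  | 0 => rfl
  | j + 1 => funext fun x => by
    simp only [Rint, Rint_const_mul c f j, ← intervalIntegral.integral_const_mul, mul_left_comm]

lemma norm_Rint_le {R M C : ℝ} (hM : 0 ≤ M) (hMb : ∀ i ≤ n, ∀ s, |s - x0| ≤ R → ‖b i s‖ ≤ M)
    {f : ℝ → ℂ} {p : ℕ} (hf : ∀ s, |s - x0| ≤ R → ‖f s‖ ≤ C * |s - x0| ^ p / p.factorial) :
    ∀ j y, |y - x0| ≤ R →
      ‖Rint b x0 n f j y‖ ≤ C * M ^ j * |y - x0| ^ (p + j) / (p + j).factorial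
  | 0, y, hy => by simpa [Rint] using hf y hy
  | j + 1, y, hy => by
    refine norm_integral_le_pow_div_factorial fun s hs => ?_
    have hsR : |s - x0| ≤ R := hs.trans hy
    calc ‖b (n - j) s * Rint b x0 n f j s‖
        ≤ M * (C * M ^ j * |s - x0| ^ (p + j) / (p + j).factorial) := by
          rw [norm_mul]
          exact mul_le_mul (hMb _ (Nat.sub_le n j) s hsR) (norm_Rint_le hM hMb hf j s hsR)
            (norm_nonneg _) hM
      _ = C * M ^ (j + 1) * |s - x0| ^ (p + j) / (p + j).factorial := by ring

lemma hasSum_Rint {R M : ℝ} (hbc : ∀ i, Continuous (b i)) (hM : 0 ≤ M)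
    (hMb : ∀ i ≤ n, ∀ s, |s - x0| ≤ R → ‖b i s‖ ≤ M) {f : ℕ → ℝ → ℂ} {F : ℝ → ℂ} {a : ℕ → ℝ}
    (hfc : ∀ m, Continuous (f m)) (ha : Summable a) (hfa : ∀ m s, |s - x0| ≤ R → ‖f m s‖ ≤ a m)
    (hF : ∀ s, |s - x0| ≤ R → HasSum (fun m => f m s) (F s)) :
    ∀ j y, |y - x0| ≤ R → HasSum (fun m => Rint b x0 n (f m) j y) (Rint b x0 n F j y)
  | 0, y, hy => hF y hy
  | j + 1, y, hy => by
    set g : ℝ → ℝ := fun t => M ^ (j + 1) * |t - x0| ^ j / j.factorial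
    refine intervalIntegral.hasSum_integral_of_dominated_convergence (fun m t => a m * g t)
      (fun m => ((hbc _).mul (Rint_continuous hbc (hfc m) j)).aestronglyMeasurable)
      (fun m => ae_of_all _ fun t ht => ?_) (ae_of_all _ fun t _ => ha.mul_right _) ?_
      (ae_of_all _ fun t ht => ?_)
    · have htR : |t - x0| ≤ R :=
        (Set.abs_sub_left_of_mem_uIcc (Set.uIoc_subset_uIcc ht)).trans hy
      have hRint := norm_Rint_le (p := 0) hM hMb (fun s hs => by simpa using hfa m s hs) j t htR
      rw [norm_mul]
      calc ‖b (n - j) t‖ * ‖Rint b x0 n (f m) j t‖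
          ≤ M * (a m * M ^ j * |t - x0| ^ (0 + j) / (0 + j).factorial) :=
            mul_le_mul (hMb _ (Nat.sub_le n j) t htR) hRint (norm_nonneg _) hM
        _ = a m * g t := by simp only [g, zero_add]; ring
    · simp_rw [tsum_mul_right]
      exact (continuous_const.mul (by fun_prop)).intervalIntegrable _ _
    · exact (hasSum_Rint hbc hM hMb hfc ha hfa hF j t
        ((Set.abs_sub_left_of_mem_uIcc (Set.uIoc_subset_uIcc ht)).trans hy)).mul_left _

end Rint

/-- The paper's `𝓘_{j+1,p} = ∫ b_{j+1} ⋯ ∫ b_p 1`, continued by `0` for `j > p`. -/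
noncomputable def Itail (b : ℕ → ℝ → ℂ) (x0 : ℝ) (p j : ℕ) : ℝ → ℂ :=
  if j ≤ p then Rint b x0 p (fun _ => 1) (p - j) else 0

lemma Itail_zero (b : ℕ → ℝ → ℂ) (x0 : ℝ) (p : ℕ) : Itail b x0 p 0 = I1 b x0 p := by
  simp [Itail, I1]

lemma Itail_of_lt {b : ℕ → ℝ → ℂ} {x0 : ℝ} {p j : ℕ} (h : p < j) : Itail b x0 p j = 0 := by
  simp [Itail, Nat.not_le.2 h]

lemma hasDerivAt_Itail {b : ℕ → ℝ → ℂ} (hbc : ∀ i, Continuous (b i)) (x0 : ℝ) (p j : ℕ) (x : ℝ) :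
    HasDerivAt (Itail b x0 p j) (b (j + 1) x * Itail b x0 p (j + 1) x) x := by
  rcases lt_trichotomy j p with hj | rfl | hj
  · simp only [Itail, if_pos hj.le, if_pos (Nat.succ_le_of_lt hj)]
    exact hasDerivAt_Rint_sub hbc continuous_const hj x
  · simp [Itail, Rint, hasDerivAt_const]
  · simp [Itail_of_lt hj, Itail_of_lt (hj.trans (Nat.lt_succ_self j))]

lemma Dchain_eq_of_hasDerivAt {b : ℕ → ℝ → ℂ} (hb : ∀ i x, b i x ≠ 0) {y : ℝ → ℂ}
    {F : ℕ → ℝ → ℂ} {N : ℕ} (hy : ∀ x, y x = b 0 x * F 0 x)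
    (hF : ∀ j < N, ∀ x, HasDerivAt (F j) (b (j + 1) x * F (j + 1) x) x) :
    ∀ j ≤ N, Dchain b j y = F j
  | 0, _ => funext fun x => by simp [Dchain, hy, hb 0 x]
  | j + 1, hj => funext fun x => by
    change deriv (Dchain b j y) x / b (j + 1) x = F (j + 1) x
    rw [Dchain_eq_of_hasDerivAt hb hy hF j (Nat.le_of_succ_le hj),
      (hF j hj x).deriv, mul_div_cancel_left₀ _ (hb _ x)]

section formalQ

variable {b : ℕ → ℝ → ℂ} {r : ℝ → ℂ} {x0 : ℝ} {n k : ℕ}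

lemma formalQ_continuous (hbc : ∀ i, Continuous (b i)) (hr : Continuous r) :
    ∀ m, Continuous (formalQ b r x0 n k m)
  | 0 => Rint_continuous hbc continuous_const _
  | m + 1 => Rint_continuous hbc ((hr.mul (hbc 0)).mul (formalQ_continuous hbc hr m)) n

lemma norm_formalQ_le {R M K C : ℝ} (hM : 0 ≤ M) (hMb : ∀ i ≤ n, ∀ s, |s - x0| ≤ R → ‖b i s‖ ≤ M)
    (hK : 0 ≤ K) (hKb : ∀ s, |s - x0| ≤ R → ‖r s * b 0 s‖ ≤ K)
    (hC : ∀ s, |s - x0| ≤ R → ‖formalQ b r x0 n k 0 s‖ ≤ C) :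
    ∀ m y, |y - x0| ≤ R →
      ‖formalQ b r x0 n k m y‖ ≤ C * (K * M ^ n) ^ m * |y - x0| ^ (m * n) / (m * n).factorial
  | 0, y, hy => by simpa using hC y hy
  | m + 1, y, hy => by
    have hf : ∀ s, |s - x0| ≤ R → ‖r s * b 0 s * formalQ b r x0 n k m s‖ ≤
        K * (C * (K * M ^ n) ^ m) * |s - x0| ^ (m * n) / (m * n).factorial := fun s hs => by
      rw [norm_mul]
      calc ‖r s * b 0 s‖ * ‖formalQ b r x0 n k m s‖
          ≤ K * (C * (K * M ^ n) ^ m * |s - x0| ^ (m * n) / (m * n).factorial) :=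
            mul_le_mul (hKb s hs) (norm_formalQ_le hM hMb hK hKb hC m s hs) (norm_nonneg _) hK
        _ = K * (C * (K * M ^ n) ^ m) * |s - x0| ^ (m * n) / (m * n).factorial := by ring
    rw [show (m + 1) * n = m * n + n by ring]
    refine (norm_Rint_le hM hMb hf n y hy).trans_eq ?_
    ring

lemma exists_summable_norm_formalQ_mul_pow_le (hn : 0 < n) (hbc : ∀ i, Continuous (b i))
    (hr : Continuous r) (lam : ℂ) (R : ℝ) :
    ∃ a : ℕ → ℝ, Summable a ∧
      ∀ m s, |s - x0| ≤ R → ‖formalQ b r x0 n k m s * lam ^ m‖ ≤ a m := by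
  obtain ⟨M, hM, hMb⟩ := exists_norm_le_near_of_le hbc n x0 R
  obtain ⟨K, hK, hKb⟩ := exists_norm_le_near (f := fun s => r s * b 0 s) (hr.mul (hbc 0)) x0 R
  obtain ⟨C, hC0, hC⟩ := exists_norm_le_near (formalQ_continuous (x0 := x0) (n := n) (k := k)
    hbc hr 0) x0 R
  refine ⟨fun m => C * ((K * M ^ n * R ^ n * ‖lam‖) ^ m / m.factorial),
    (Real.summable_pow_div_factorial _).mul_left C, fun m s hs => ?_⟩
  have hR : 0 ≤ R := (abs_nonneg _).trans hs
  have hfac : (m.factorial : ℝ) ≤ (m * n).factorial :=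
    Nat.cast_le.2 (Nat.factorial_le (Nat.le_mul_of_pos_right m hn))
  calc ‖formalQ b r x0 n k m s * lam ^ m‖ = ‖formalQ b r x0 n k m s‖ * ‖lam‖ ^ m := by
        rw [norm_mul, norm_pow]
    _ ≤ C * (K * M ^ n) ^ m * |s - x0| ^ (m * n) / (m * n).factorial * ‖lam‖ ^ m := by
        gcongr
        exact norm_formalQ_le hM hMb hK hKb hC m s hs
    _ ≤ C * (K * M ^ n) ^ m * R ^ (m * n) / m.factorial * ‖lam‖ ^ m := by
        gcongr
    _ = C * ((K * M ^ n * R ^ n * ‖lam‖) ^ m / m.factorial) := by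
        rw [mul_comm m n, pow_mul]
        ring

end formalQ

/-- `sppsSeries … x = ∑ₘ P_k^{(m)}(x) λᵐ / (mn+k-1)!`, so that `u_k = b₀ · sppsSeries`. -/
noncomputable def sppsSeries (b : ℕ → ℝ → ℂ) (r : ℝ → ℂ) (x0 : ℝ) (n k : ℕ) (lam : ℂ) (x : ℝ) :
    ℂ :=
  ∑' m, formalQ b r x0 n k m x * lam ^ m

section sppsSeries

variable {b : ℕ → ℝ → ℂ} {r : ℝ → ℂ} {x0 : ℝ} {n k : ℕ}

lemma sppsSeries_continuous (hn : 0 < n) (hbc : ∀ i, Continuous (b i)) (hr : Continuous r)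
    (lam : ℂ) : Continuous (sppsSeries b r x0 n k lam) := by
  refine continuous_iff_continuousAt.2 fun x => ?_
  obtain ⟨a, ha, hQa⟩ :=
    exists_summable_norm_formalQ_mul_pow_le (x0 := x0) (k := k) hn hbc hr lam (|x - x0| + 1)
  have hcont : ContinuousOn (sppsSeries b r x0 n k lam) (Metric.ball x0 (|x - x0| + 1)) :=
    continuousOn_tsum (fun m => ((formalQ_continuous hbc hr m).mul_const _).continuousOn) ha
      fun m s hs => hQa m s (by rw [Metric.mem_ball, Real.dist_eq] at hs; exact hs.le)
  exact hcont.continuousAt (Metric.isOpen_ball.mem_nhds (by simp [Real.dist_eq]))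

lemma hasSum_formalQ_mul_pow (hn : 0 < n) (hbc : ∀ i, Continuous (b i)) (hr : Continuous r)
    (lam : ℂ) (x : ℝ) :
    HasSum (fun m => formalQ b r x0 n k m x * lam ^ m) (I1 b x0 (k - 1) x +
      lam * Rint b x0 n (fun s => r s * b 0 s * sppsSeries b r x0 n k lam s) n x) := by
  obtain ⟨a, ha, hQa⟩ :=
    exists_summable_norm_formalQ_mul_pow_le (x0 := x0) (k := k) hn hbc hr lam |x - x0|
  obtain ⟨M, hM, hMb⟩ := exists_norm_le_near_of_le hbc n x0 |x - x0|
  obtain ⟨K, hK, hKb⟩ :=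
    exists_norm_le_near (f := fun s => r s * b 0 s) (hr.mul (hbc 0)) x0 |x - x0|
  have hterms := hasSum_Rint (f := fun m s => lam ^ m * (r s * b 0 s * formalQ b r x0 n k m s))
    (F := fun s => r s * b 0 s * sppsSeries b r x0 n k lam s) (a := fun m => K * a m) hbc hM hMb
    (fun m => continuous_const.mul ((hr.mul (hbc 0)).mul (formalQ_continuous hbc hr m)))
    (ha.mul_left K) ?_ ?_ n x le_rfl
  · have hshift : HasSum (fun m => formalQ b r x0 n k (m + 1) x * lam ^ (m + 1))
        (lam * Rint b x0 n (fun s => r s * b 0 s * sppsSeries b r x0 n k lam s) n x) := by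
      refine (hterms.mul_left lam).congr_fun fun m => ?_
      rw [Rint_const_mul, pow_succ]
      change formalQ b r x0 n k (m + 1) x * (lam ^ m * lam) =
        lam * (lam ^ m * formalQ b r x0 n k (m + 1) x)
      ring
    have h := (hasSum_nat_add_iff (f := fun m => formalQ b r x0 n k m x * lam ^ m) 1).1 hshift
    rw [Finset.sum_range_one, pow_zero, mul_one, add_comm] at h
    exact h
  · intro m s hs
    rw [show lam ^ m * (r s * b 0 s * formalQ b r x0 n k m s) =
      r s * b 0 s * (formalQ b r x0 n k m s * lam ^ m) by ring, norm_mul]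
    exact mul_le_mul (hKb s hs) (hQa m s hs) (norm_nonneg _) hK
  · intro s hs
    exact ((Summable.of_norm_bounded ha (hQa · s hs)).hasSum.mul_left (r s * b 0 s)).congr_fun
      fun m => by ring

end sppsSeries

theorem spps_solution_solves_general
    (n k : ℕ) (hk : 1 ≤ k) (hkn : k ≤ n) (x0 : ℝ)
    (b : ℕ → ℝ → ℂ) (r : ℝ → ℂ)
    (hbc : ∀ m, Continuous (b m)) (hb0 : ∀ m, ∀ x : ℝ, b m x ≠ 0)
    (hr : Continuous r) (lam : ℂ)
    (u : ℝ → ℂ)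
    (hu : ∀ x, u x = b 0 x * ∑' m : ℕ, formalQ b r x0 n k m x * lam ^ m) :
    ∀ x : ℝ, Dchain b n u x = lam * r x * u x := by
  have hn : 0 < n := by omega
  set S := sppsSeries b r x0 n k lam
  set h : ℝ → ℂ := fun s => r s * b 0 s * S s
  have hh : Continuous h := (hr.mul (hbc 0)).mul (sppsSeries_continuous hn hbc hr lam)
  set F : ℕ → ℝ → ℂ := fun j y => Itail b x0 (k - 1) j y + lam * Rint b x0 n h (n - j) y
  have hF : ∀ j < n, ∀ y, HasDerivAt (F j) (b (j + 1) y * F (j + 1) y) y := fun j hj y => by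
    refine ((hasDerivAt_Itail hbc x0 (k - 1) j y).add
      ((hasDerivAt_Rint_sub (x0 := x0) hbc hh hj y).const_mul lam)).congr_deriv ?_
    ring
  have hu' : ∀ y, u y = b 0 y * F 0 y := fun y => by
    rw [hu, (hasSum_formalQ_mul_pow hn hbc hr lam y).tsum_eq]
    simp only [F, Itail_zero, Nat.sub_zero]
    rfl
  intro x
  rw [Dchain_eq_of_hasDerivAt hb0 hu' hF n le_rfl, hu x]
  change _ = lam * r x * (b 0 x * S x)
  simp only [F, Itail_of_lt (show k - 1 < n by omega), Nat.sub_self, Rint, h, Pi.zero_apply,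
    zero_add]
  ring

theorem spps_solution_solves
    (n k : ℕ) (hn : 2 ≤ n) (hk : 1 ≤ k) (hkn : k ≤ n) (x0 : ℝ)
    (b : ℕ → ℝ → ℂ) (r : ℝ → ℂ)
    (hbc : ∀ m, Continuous (b m)) (hb0 : ∀ m, ∀ x : ℝ, b m x ≠ 0)
    (hr : Continuous r) (lam : ℂ)
    (u : ℝ → ℂ)
    (hu : ∀ x, u x = b 0 x * ∑' m : ℕ, formalQ b r x0 n k m x * lam ^ m) :
    ∀ x : ℝ, Dchain b n u x = lam * r x * u x :=
  spps_solution_solves_general n k hk hkn x0 b r hbc hb0 hr lam u hu
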